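/- Suppose G is a group such that every class in H₂(G; ℤ) equals g ∧ h for some commuting g, h ∈ G, and G contains no subgroup isomorphic to ℤ × ℤ. Then H₂(G; ℚ) = 0. -/

import Mathlib

/-!
Let `x` be a rational 2-cycle. Clearing denominators, `N • x` is the image of an integral cycle,
which by hypothesis is homologous to `g ∧ h` for commuting `g, h`; so it suffices that `g ∧ h` is
a rational boundary. Modulo boundaries, `a ↦ a ∧ c` is additive on the centralizer of `c`, so
`(g ^ m * h ^ n) ∧ h = m • (g ∧ h)`. The homomorphism `ℤ² → G`, `(m, n) ↦ g ^ m * h ^ n`, cannot be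
injective, since `G` has no subgroup `ℤ²`; a nonzero `(m, n)` in its kernel gives
`m • (g ∧ h) = 0` or `n • (h ∧ g) = 0`, which kills `g ∧ h` over `ℚ`.
-/

open Finsupp

/-- Degree-2 differential of the (inhomogeneous) bar complex of `G` with
coefficients in `k`: `[a|b] ↦ [b] - [ab] + [a]`. -/
noncomputable def barD2 (k : Type) [Ring k] (G : Type) [Group G] :
    ((G × G) →₀ k) →ₗ[k] (G →₀ k) :=
  Finsupp.lift _ k _ fun p => single p.2 1 - single (p.1 * p.2) 1 + single p.1 1

/-- Degree-3 differential of the bar complex: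
`[a|b|c] ↦ [b|c] - [ab|c] + [a|bc] - [a|b]`. -/
noncomputable def barD3 (k : Type) [Ring k] (G : Type) [Group G] :
    ((G × G × G) →₀ k) →ₗ[k] ((G × G) →₀ k) :=
  Finsupp.lift _ k _ fun t =>
    single (t.2.1, t.2.2) 1 - single (t.1 * t.2.1, t.2.2) 1
      + single (t.1, t.2.1 * t.2.2) 1 - single (t.1, t.2.1) 1

/-- The second group homology `H₂(G; k)`: 2-cycles modulo 2-boundaries of the
bar complex of `G` with coefficients in `k`. -/
noncomputable abbrev groupH2 (k : Type) [Ring k] (G : Type) [Group G] : Type :=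
  (barD2 k G).toAddMonoidHom.ker ⧸
    (((barD3 k G).toAddMonoidHom.range).comap (barD2 k G).toAddMonoidHom.ker.subtype)

theorem wedge_cycle {k : Type} [Ring k] {G : Type} [Group G] (g h : G)
    (hc : g * h = h * g) :
    single (g, h) (1 : k) - single (h, g) 1 ∈ (barD2 k G).toAddMonoidHom.ker := by
  rw [AddMonoidHom.mem_ker, LinearMap.toAddMonoidHom_coe, map_sub]
  simp only [barD2, Finsupp.lift_apply, sum_single_index, one_smul, zero_smul, hc]
  abel

/-- The Pontryagin product `g ∧ h ∈ H₂(G; k)` of commuting elements `g, h` of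
`G`, i.e. the homology class of the bar 2-cycle `[g|h] - [h|g]`. -/
noncomputable def wedgeClass (k : Type) [Ring k] {G : Type} [Group G]
    (g h : G) (hc : g * h = h * g) : groupH2 k G :=
  QuotientAddGroup.mk ⟨single (g, h) 1 - single (h, g) 1, wedge_cycle g h hc⟩

section maps

variable (k : Type) [Ring k] {G H : Type} [Group G] [Group H] (f : G →* H)

noncomputable def barC1Map : (G →₀ k) →ₗ[k] (H →₀ k) := Finsupp.lmapDomain k k f

noncomputable def barC2Map : ((G × G) →₀ k) →ₗ[k] ((H × H) →₀ k) :=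
  Finsupp.lmapDomain k k (Prod.map f f)

noncomputable def barC3Map : ((G × G × G) →₀ k) →ₗ[k] ((H × H × H) →₀ k) :=
  Finsupp.lmapDomain k k (Prod.map f (Prod.map f f))

theorem mapDomain_sub' {k : Type} [Ring k] {α β : Type} (f : α → β)
    (x y : α →₀ k) : mapDomain f (x - y) = mapDomain f x - mapDomain f y :=
  (Finsupp.mapDomain.addMonoidHom f).map_sub x y

theorem barD2_comm :
    (barD2 k H).comp (barC2Map k f) = (barC1Map k f).comp (barD2 k G) := by
  apply Finsupp.lhom_ext
  intro a b
  simp only [LinearMap.comp_apply, barC2Map, barC1Map, lmapDomain_apply,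
    mapDomain_single, barD2, Finsupp.lift_apply, sum_single_index, one_smul,
    zero_smul, smul_sub, smul_add]
  simp [mapDomain_add, mapDomain_sub', mapDomain_single, Prod.map, map_mul]

theorem barD3_comm :
    (barD3 k H).comp (barC3Map k f) = (barC2Map k f).comp (barD3 k G) := by
  apply Finsupp.lhom_ext
  intro a b
  simp only [LinearMap.comp_apply, barC3Map, barC2Map, lmapDomain_apply,
    mapDomain_single, barD3, Finsupp.lift_apply, sum_single_index, one_smul,
    zero_smul, smul_sub, smul_add]
  simp [mapDomain_add, mapDomain_sub', mapDomain_single, Prod.map, map_mul]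

theorem barC2Map_ker (x : (G × G) →₀ k) (hx : x ∈ (barD2 k G).toAddMonoidHom.ker) :
    barC2Map k f x ∈ (barD2 k H).toAddMonoidHom.ker := by
  rw [AddMonoidHom.mem_ker, LinearMap.toAddMonoidHom_coe] at hx ⊢
  have := congrFun (congrArg DFunLike.coe (barD2_comm k f)) x
  simp only [LinearMap.comp_apply] at this
  rw [this, hx, map_zero]

/-- The homomorphism `H₂(G; k) → H₂(H; k)` induced by a group homomorphism
`f : G → H`. -/
noncomputable def groupH2Map : groupH2 k G →+ groupH2 k H := by
  refine QuotientAddGroup.map _ _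
    ((((barC2Map k f).toAddMonoidHom.domRestrict
        (barD2 k G).toAddMonoidHom.ker).codRestrict
      (barD2 k H).toAddMonoidHom.ker
      (fun x => barC2Map_ker k f x.1 x.2)) : _ →+ _) ?_
  rintro ⟨x, hx⟩ hmem
  simp only [AddSubgroup.mem_comap, AddSubgroup.coe_subtype,
    AddMonoidHom.mem_range] at hmem ⊢
  obtain ⟨y, hy⟩ := hmem
  refine ⟨barC3Map k f y, ?_⟩
  have h3 := congrFun (congrArg DFunLike.coe (barD3_comm k f)) y
  simp only [LinearMap.comp_apply] at h3
  simp only [LinearMap.toAddMonoidHom_coe, AddSubgroup.coe_subtype] at hy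
  simp only [AddMonoidHom.codRestrict_apply, AddMonoidHom.domRestrict_apply,
    LinearMap.toAddMonoidHom_coe, AddSubgroup.coe_subtype]
  rw [h3, hy]
  rfl

end maps

section wedge

variable (k : Type) [Ring k] {G : Type} [Group G]

noncomputable def wedgeChain (g h : G) : (G × G) →₀ k :=
  single (g, h) 1 - single (h, g) 1

noncomputable def wedgeMod (g h : G) : ((G × G) →₀ k) ⧸ LinearMap.range (barD3 k G) :=
  Submodule.Quotient.mk (wedgeChain k g h)

theorem barD3_single (a b c : G) :
    barD3 k G (single (a, b, c) 1) =
      single (b, c) 1 - single (a * b, c) 1 + single (a, b * c) 1 - single (a, b) 1 := by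
  simp [barD3, sum_single_index]

variable {k}

theorem wedgeMod_mul_left {a b c : G} (hac : Commute a c) (hbc : Commute b c) :
    wedgeMod k (a * b) c = wedgeMod k a c + wedgeMod k b c := by
  rw [wedgeMod, wedgeMod, wedgeMod, ← Submodule.Quotient.mk_add, Submodule.Quotient.eq]
  refine ⟨single (a, c, b) 1 - single (c, a, b) 1 - single (a, b, c) 1, ?_⟩
  simp only [map_sub, barD3_single, wedgeChain, hac.eq, hbc.eq]
  abel

theorem wedgeMod_self (g : G) : wedgeMod k g g = 0 := by
  simp [wedgeMod, wedgeChain]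

theorem wedgeMod_swap (g h : G) : wedgeMod k h g = -wedgeMod k g h := by
  rw [wedgeMod, wedgeMod, ← Submodule.Quotient.mk_neg, wedgeChain, wedgeChain, neg_sub]

variable (k) in
noncomputable def wedgeModHom (c : G) :
    Subgroup.centralizer {c} →* Multiplicative (((G × G) →₀ k) ⧸ LinearMap.range (barD3 k G)) :=
  MonoidHom.mk' (fun a => .ofAdd (wedgeMod k a c)) fun a b =>
    wedgeMod_mul_left (Subgroup.mem_centralizer_singleton_iff.1 a.2)
      (Subgroup.mem_centralizer_singleton_iff.1 b.2)

theorem wedgeMod_zpow_left {g h : G} (hc : Commute g h) (m : ℤ) :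
    wedgeMod k (g ^ m) h = m • wedgeMod k g h :=
  congrArg Multiplicative.toAdd
    (map_zpow (wedgeModHom k h) ⟨g, Subgroup.mem_centralizer_singleton_iff.2 hc.eq⟩ m)

theorem zsmul_wedgeMod_eq_zero {g h : G} (hc : Commute g h) {m n : ℤ}
    (hmn : g ^ m * h ^ n = 1) : m • wedgeMod k g h = 0 := by
  have hone : wedgeMod k (1 : G) h = 0 := by simpa using wedgeMod_zpow_left (k := k) hc 0
  calc m • wedgeMod k g h = wedgeMod k (g ^ m) h + wedgeMod k (h ^ n) h := by
        rw [wedgeMod_zpow_left hc, wedgeMod_zpow_left (Commute.refl h), wedgeMod_self, smul_zero,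
          add_zero]
    _ = wedgeMod k (g ^ m * h ^ n) h :=
        (wedgeMod_mul_left (hc.zpow_left m) ((Commute.refl h).zpow_left n)).symm
    _ = 0 := by rw [hmn, hone]

end wedge

theorem exists_zpow_mul_zpow_eq_one {G : Type} [Group G]
    (hG : ∀ K : Subgroup G, ¬ Nonempty (K ≃* Multiplicative (ℤ × ℤ))) {g h : G}
    (hc : Commute g h) : ∃ m n : ℤ, (m ≠ 0 ∨ n ≠ 0) ∧ g ^ m * h ^ n = 1 := by
  let φ := (zpowersHom G g).noncommCoprod (zpowersHom G h) fun m n => hc.zpow_zpow _ _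
  have hφ : ¬ Function.Injective φ := fun hinj =>
    hG φ.range ⟨(MonoidHom.ofInjective hinj).symm.trans (MulEquiv.prodMultiplicative ℤ ℤ).symm⟩
  rw [injective_iff_map_eq_one] at hφ
  push Not at hφ
  obtain ⟨⟨m, n⟩, hmn, hne⟩ := hφ
  refine ⟨m.toAdd, n.toAdd, ?_, hmn⟩
  by_contra! h0
  exact hne (Prod.ext h0.1 h0.2)

theorem wedgeMod_eq_zero {k : Type} [DivisionRing k] [CharZero k] {G : Type} [Group G]
    (hG : ∀ K : Subgroup G, ¬ Nonempty (K ≃* Multiplicative (ℤ × ℤ))) {g h : G}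
    (hc : Commute g h) : wedgeMod k g h = 0 := by
  have hcancel : ∀ {m : ℤ} {x : ((G × G) →₀ k) ⧸ LinearMap.range (barD3 k G)},
      m ≠ 0 → m • x = 0 → x = 0 := fun hm hx => by
    rw [← Int.cast_smul_eq_zsmul k, smul_eq_zero] at hx
    exact hx.resolve_left (Int.cast_ne_zero.2 hm)
  obtain ⟨m, n, hm | hn, hmn⟩ := exists_zpow_mul_zpow_eq_one hG hc
  · exact hcancel hm (zsmul_wedgeMod_eq_zero hc hmn)
  · rw [← neg_eq_zero, ← wedgeMod_swap]
    exact hcancel hn (zsmul_wedgeMod_eq_zero hc.symm (by rwa [← (hc.zpow_zpow m n).eq]))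

noncomputable abbrev castChain (α : Type) : (α →₀ ℤ) →ₗ[ℤ] (α →₀ ℚ) :=
  Finsupp.mapRange.linearMap (Algebra.linearMap ℤ ℚ)

section castChain

variable {α : Type}

theorem castChain_injective : Function.Injective (castChain α) :=
  Finsupp.mapRange_injective _ (map_zero _) Int.cast_injective

theorem exists_castChain_eq_smul (x : α →₀ ℚ) :
    ∃ (N : ℤ) (z : α →₀ ℤ), N ≠ 0 ∧ castChain α z = (N : ℚ) • x := by
  obtain ⟨⟨z, N⟩, hz⟩ := IsLocalizedModule.surj (nonZeroDivisors ℤ) (castChain α) x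
  exact ⟨N, z, nonZeroDivisors.coe_ne_zero N, hz.symm.trans (Int.cast_smul_eq_zsmul ℚ _ x).symm⟩

variable {G : Type} [Group G]

theorem barD2_castChain (z : (G × G) →₀ ℤ) :
    barD2 ℚ G (castChain _ z) = castChain _ (barD2 ℤ G z) := by
  suffices (barD2 ℚ G).restrictScalars ℤ ∘ₗ castChain _ = castChain _ ∘ₗ barD2 ℤ G from
    LinearMap.congr_fun this z
  ext p : 2
  simp [barD2, sum_single_index, mapRange_sub, mapRange_add]

theorem barD3_castChain (z : (G × G × G) →₀ ℤ) :
    barD3 ℚ G (castChain _ z) = castChain _ (barD3 ℤ G z) := by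
  suffices (barD3 ℚ G).restrictScalars ℤ ∘ₗ castChain _ = castChain _ ∘ₗ barD3 ℤ G from
    LinearMap.congr_fun this z
  ext p : 2
  simp [barD3, sum_single_index, mapRange_sub, mapRange_add]

theorem castChain_mem_range_barD3 {w : (G × G) →₀ ℤ} (hw : w ∈ LinearMap.range (barD3 ℤ G)) :
    castChain _ w ∈ LinearMap.range (barD3 ℚ G) := by
  obtain ⟨y, rfl⟩ := hw
  exact ⟨castChain _ y, barD3_castChain y⟩

theorem castChain_mem_range_barD3_of_homologous_wedge
    (hG : ∀ K : Subgroup G, ¬ Nonempty (K ≃* Multiplicative (ℤ × ℤ))) {g h : G}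
    (hc : Commute g h) {z : (G × G) →₀ ℤ}
    (hz : -z + wedgeChain ℤ g h ∈ LinearMap.range (barD3 ℤ G)) :
    castChain _ z ∈ LinearMap.range (barD3 ℚ G) := by
  have hwedge : wedgeChain ℚ g h ∈ LinearMap.range (barD3 ℚ G) :=
    (Submodule.Quotient.mk_eq_zero _).1 (wedgeMod_eq_zero hG hc)
  have hcast := castChain_mem_range_barD3 hz
  have hcast_wedge : castChain _ (wedgeChain ℤ g h) = wedgeChain ℚ g h := by
    simp [wedgeChain, mapRange_sub]
  rw [map_add, map_neg, hcast_wedge] at hcast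
  simpa using sub_mem hwedge hcast

end castChain

/-- If every class of `H₂(G; ℤ)` is a Pontryagin product `g ∧ h` of commuting
elements, and `G` has no subgroup isomorphic to `ℤ × ℤ`, then `H₂(G; ℚ) = 0`. -/
theorem stmt12 (G : Type) [Group G]
    (hwedge : ∀ u : groupH2 ℤ G,
      ∃ (g h : G) (hc : g * h = h * g), u = wedgeClass ℤ g h hc)
    (hG : ∀ K : Subgroup G, ¬ Nonempty (K ≃* Multiplicative (ℤ × ℤ))) :
    Subsingleton (groupH2 ℚ G) := by
  refine subsingleton_of_forall_eq 0 fun u => QuotientAddGroup.induction_on u fun ⟨x, hx⟩ => ?_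
  rw [QuotientAddGroup.eq_zero_iff, AddSubgroup.mem_comap]
  obtain ⟨N, z, hN, hz⟩ := exists_castChain_eq_smul x
  have hzcycle : z ∈ (barD2 ℤ G).toAddMonoidHom.ker := by
    rw [AddMonoidHom.mem_ker, LinearMap.toAddMonoidHom_coe] at hx ⊢
    refine castChain_injective ?_
    rw [← barD2_castChain, hz, map_smul, hx, smul_zero, map_zero]
  obtain ⟨g, h, hc, hu⟩ := hwedge (QuotientAddGroup.mk ⟨z, hzcycle⟩)
  have hNx := castChain_mem_range_barD3_of_homologous_wedge hG hc (QuotientAddGroup.eq.1 hu)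
  rw [hz] at hNx
  exact (Submodule.smul_mem_iff _ (Int.cast_ne_zero.2 hN)).1 hNx
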